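/- Let H_d = (ς(u w⋆))_{u,w ∈ ⟨x⟩_d} be the matrix over 𝒮 indexed by words of length at most d. Every principal minor m of H_d is a quotient of two elements of Ω: there exist p, q ∈ Ω with q ≠ 0 and q·m = p in 𝒮. -/

import Mathlib

open scoped BigOperators Matrix Kronecker

namespace StatePoly

/-! ### Words and symmetrized words -/

/-- Words in the letters `x_1, …, x_n`: the free monoid on `Fin n`. -/
abbrev Word (n : ℕ) := FreeMonoid (Fin n)

/-- The word reversal (the involution `⋆` on words). -/
def wordRev {n : ℕ} (w : Word n) : Word n := FreeMonoid.reverse w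

/-- Two nonempty words are identified iff they are equal or reverses of each other;
this realizes the relation `ς(w) = ς(w⋆)`. -/
def wordSetoid (n : ℕ) : Setoid {l : List (Fin n) // l ≠ []} where
  r u v := u.1 = v.1 ∨ u.1 = v.1.reverse
  iseqv := by
    constructor
    · intro u; exact Or.inl rfl
    · rintro u v (h | h)
      · exact Or.inl h.symm
      · right; rw [h, List.reverse_reverse]
    · rintro u v w (h1 | h1) (h2 | h2)
      · exact Or.inl (h1.trans h2)
      · right; rw [h1, h2]
      · right; rw [h1, h2]
      · left; rw [h1, h2, List.reverse_reverse]

/-- Symbols `ς(w)`, `w` a nonempty word, modulo `ς(w) = ς(w⋆)`. -/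
def SW (n : ℕ) := Quotient (wordSetoid n)

/-- The commutative algebra `𝒮` of state polynomials:
a polynomial ring in the symbols `ς(w)`. -/
abbrev SPoly (n : ℕ) := MvPolynomial (SW n) ℝ

/-- The algebra `𝐒 = 𝒮 ⊗ ℝ⟨x⟩` of nc state polynomials, realized as the monoid algebra
of the free monoid over the polynomial ring `𝒮`. -/
abbrev NCSPoly (n : ℕ) := MonoidAlgebra (SPoly n) (Word n)

variable {n : ℕ}

/-- The state symbol `ς(w)` of a word, with `ς(1) = 1`. -/
noncomputable def sigWordL (l : List (Fin n)) : SPoly n :=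
  if h : l = [] then 1 else MvPolynomial.X (Quotient.mk (wordSetoid n) ⟨l, h⟩)

/-- The unital `𝒮`-linear map `ς : 𝐒 → 𝒮`. -/
noncomputable def sig (f : NCSPoly n) : SPoly n :=
  Finsupp.sum f.coeff fun w c => c * sigWordL (FreeMonoid.toList w)

/-- The involution `⋆` on `𝐒`: it fixes `𝒮 ∪ {x_1, …, x_n}` pointwise and reverses words. -/
noncomputable def ncStar (f : NCSPoly n) : NCSPoly n :=
  MonoidAlgebra.ofCoeff (Finsupp.mapDomain wordRev f.coeff)

/-- The embedding `𝒮 ⊆ 𝐒`. -/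
noncomputable def iotaS (p : SPoly n) : NCSPoly n := MonoidAlgebra.single 1 p

/-- The variable `x_i` as an nc state polynomial. -/
noncomputable def ncX (i : Fin n) : NCSPoly n := MonoidAlgebra.single (FreeMonoid.of i) 1

/-- A real constant as an nc state polynomial. -/
noncomputable def ncConst (r : ℝ) : NCSPoly n := iotaS (MvPolynomial.C r)

/-- `f ∈ 𝐒` lies in the free algebra `ℝ⟨x⟩ ⊆ 𝐒` iff all its coefficients are real constants. -/
def IsFreePoly (f : NCSPoly n) : Prop := ∀ w : Word n, ∃ r : ℝ, f.coeff w = MvPolynomial.C r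

/-! ### Degrees -/

/-- `|w|` on symmetrized words. -/
def swDeg : SW n → ℕ :=
  Quotient.lift (fun l : {l : List (Fin n) // l ≠ []} => l.1.length)
    (by rintro u v (h | h) <;> simp [h])

/-- The degree of a monomial `∏ ς(u_j)^{e_j}`, namely `∑ e_j |u_j|`. -/
def monoWeight (m : SW n →₀ ℕ) : ℕ := m.sum fun q e => e * swDeg q

/-- The degree of a state polynomial. -/
noncomputable def sDeg (p : SPoly n) : ℕ := p.support.sup monoWeight

/-- The degree of an nc state polynomial: the maximum over the `𝐒`-words appearing in it of
`deg ς(u_1)⋯ς(u_m)v = |v| + ∑_j |u_j|`. -/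
noncomputable def ncDeg (f : NCSPoly n) : ℕ :=
  (Finsupp.support f.coeff).sup fun w => sDeg (f.coeff w) + (FreeMonoid.toList w).length

lemma sDeg_zero : sDeg (0 : SPoly n) = 0 := by
  simp [sDeg, MvPolynomial.support_zero]

lemma sDeg_add_le (p q : SPoly n) : sDeg (p + q) ≤ max (sDeg p) (sDeg q) := by
  classical
  refine Finset.sup_le fun m hm => ?_
  rcases Finset.mem_union.mp (MvPolynomial.support_add hm) with h | h
  · exact le_max_of_le_left (Finset.le_sup h)
  · exact le_max_of_le_right (Finset.le_sup h)

lemma sDeg_smul_le (c : ℝ) (p : SPoly n) : sDeg (c • p) ≤ sDeg p :=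
  Finset.sup_le fun _m hm => Finset.le_sup (MvPolynomial.support_smul hm)

lemma sDeg_one : sDeg (1 : SPoly n) = 0 := by
  classical
  refine le_antisymm (Finset.sup_le fun m hm => ?_) (Nat.zero_le _)
  have : m = 0 := by
    by_contra h
    have := MvPolynomial.mem_support_iff.mp hm
    rw [MvPolynomial.coeff_one, if_neg (fun he => h he.symm)] at this
    exact this rfl
  subst this
  simp [monoWeight]

/-- The subspace `𝒮_{k}` of state polynomials of degree at most `k`. -/
noncomputable def SPolyLe (n k : ℕ) : Submodule ℝ (SPoly n) where
  carrier := {p | sDeg p ≤ k}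
  add_mem' := fun {p q} hp hq =>
    le_trans (sDeg_add_le p q) (max_le hp hq)
  zero_mem' := by simp [Set.mem_setOf_eq, sDeg_zero]
  smul_mem' := fun c p hp => le_trans (sDeg_smul_le c p) hp

lemma one_mem_SPolyLe (k : ℕ) : (1 : SPoly n) ∈ SPolyLe n k := by
  show sDeg (1 : SPoly n) ≤ k
  simp [sDeg_one]

/-- Extension by zero of a linear functional on `𝒮_{k}` to `𝒮`
(used to refer to values of truncated functionals). -/
noncomputable def lext {n k : ℕ} (L : SPolyLe n k →ₗ[ℝ] ℝ) (p : SPoly n) : ℝ :=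
  if h : sDeg p ≤ k then L ⟨p, h⟩ else 0

/-! ### Evaluations -/

section Eval

variable {A : Type*} [Ring A] [Module ℝ A]

/-- Evaluation of a word at a tuple `X`. -/
noncomputable def wEvalL (X : Fin n → A) (l : List (Fin n)) : A := (l.map X).prod

/-- The value assigned to the symbol `ς(w)`: `λ(w(X))`. -/
noncomputable def stVal (lam : A → ℝ) (X : Fin n → A) (q : SW n) : ℝ :=
  lam (wEvalL X (Quotient.out q).1)

/-- Evaluation `a(λ; X) ∈ ℝ` of a state polynomial. -/
noncomputable def sEval (lam : A → ℝ) (X : Fin n → A) (p : SPoly n) : ℝ :=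
  MvPolynomial.eval (stVal lam X) p

/-- Evaluation `f(λ; X) ∈ A` of an nc state polynomial. -/
noncomputable def ncEval (lam : A → ℝ) (X : Fin n → A) (f : NCSPoly n) : A :=
  Finsupp.sum f.coeff fun w c => sEval lam X c • wEvalL X (FreeMonoid.toList w)

end Eval

/-! ### States on matrix algebras -/

/-- A density matrix: positive semidefinite with trace 1. -/
def IsDensity {k : ℕ} (ρ : Matrix (Fin k) (Fin k) ℝ) : Prop :=
  ρ.PosSemidef ∧ ρ.trace = 1

/-- The state on `k×k` matrices induced by a density matrix. -/
noncomputable def matState {k : ℕ} (ρ : Matrix (Fin k) (Fin k) ℝ) :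
    Matrix (Fin k) (Fin k) ℝ → ℝ := fun Y => (ρ * Y).trace

/-- The vector state on `k×k` matrices induced by a vector `ψ`. -/
noncomputable def vecStateM {k : ℕ} (ψ : Fin k → ℝ) :
    Matrix (Fin k) (Fin k) ℝ → ℝ := fun Y => ψ ⬝ᵥ Y.mulVec ψ

/-! ### States on B(H) -/

section Op

variable (H : Type*) [NormedAddCommGroup H] [InnerProductSpace ℝ H] [CompleteSpace H]

/-- A state on `B(H)`: a unital positive `⋆`-linear functional. -/
def IsState (lam : (H →L[ℝ] H) →ₗ[ℝ] ℝ) : Prop :=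
  lam 1 = 1 ∧ (∀ Y : H →L[ℝ] H, lam (ContinuousLinearMap.adjoint Y) = lam Y) ∧
    ∀ Y : H →L[ℝ] H, 0 ≤ lam (Y * ContinuousLinearMap.adjoint Y)

/-- A vector state on `B(H)`. -/
def IsVecState (lam : (H →L[ℝ] H) →ₗ[ℝ] ℝ) : Prop :=
  ∃ v : H, ‖v‖ = 1 ∧ ∀ Y : H →L[ℝ] H, lam Y = inner ℝ (Y v) v

/-- The state semialgebraic set `𝒟_C^∞` determined by the constraint set `C ⊆ 𝐒`. -/
def DCinf (C : Set (NCSPoly n)) :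
    Set ((((H →L[ℝ] H) →ₗ[ℝ] ℝ)) × (Fin n → (H →L[ℝ] H))) :=
  {p | IsState H p.1 ∧ (∀ i, ContinuousLinearMap.adjoint (p.2 i) = p.2 i) ∧
    ∀ c ∈ C, (ncEval (⇑p.1) p.2 c).IsPositive}

/-- The subset `vec-𝒟_C^∞` of `𝒟_C^∞` in which the state is a vector state. -/
def vecDCinf (C : Set (NCSPoly n)) :
    Set ((((H →L[ℝ] H) →ₗ[ℝ] ℝ)) × (Fin n → (H →L[ℝ] H))) :=
  {p ∈ DCinf H C | IsVecState H p.1}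

end Op

/-! ### Positivity structures -/

/-- `Ω`: sums of products of elements `ς(h h⋆)`, `h ∈ 𝐒`. -/
def Omega (n : ℕ) : Set (SPoly n) :=
  {x | ∃ (m : ℕ) (g : Fin m → SPoly n),
    (∀ i, ∃ (mi : ℕ) (h : Fin mi → NCSPoly n), g i = ∏ j, sig (h j * ncStar (h j))) ∧
    x = ∑ i, g i}

/-- Membership in the smallest subset of `𝒮` containing `{1} ∪ S` that is closed under
addition and under multiplication by squares of elements of `A`. -/
inductive QMemIn (A S : Set (SPoly n)) : SPoly n → Prop
  | base {s : SPoly n} : s ∈ insert (1 : SPoly n) S → QMemIn A S s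
  | add {p q : SPoly n} : QMemIn A S p → QMemIn A S q → QMemIn A S (p + q)
  | mul_sq {a p : SPoly n} : a ∈ A → QMemIn A S p → QMemIn A S (a ^ 2 * p)

/-- The quadratic module generated by `S` in `𝒮`. -/
def QM (S : Set (SPoly n)) : Set (SPoly n) := {x | QMemIn Set.univ S x}

/-- The set `C^ς = {ς(p c p⋆) : p ∈ ℝ⟨x⟩, c ∈ {1} ∪ C}`. -/
def Csig (C : Set (NCSPoly n)) : Set (SPoly n) :=
  {x | ∃ p : NCSPoly n, IsFreePoly p ∧ ∃ c ∈ insert (1 : NCSPoly n) C,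
    x = sig (p * c * ncStar p)}

/-- A balanced constraint set: closed under `⋆`, and non-symmetric elements come in `±` pairs. -/
def Balanced (C : Set (NCSPoly n)) : Prop :=
  (∀ c ∈ C, ncStar c ∈ C) ∧ ∀ c ∈ C, c ≠ ncStar c → -c ∈ C

/-- An algebraically bounded constraint set: `N - x_1^2 - ⋯ - x_n^2 = ∑ p_i c_i p_i⋆` with
`c_i ∈ {1} ∪ C ∩ ℝ⟨x⟩` and `p_i ∈ ℝ⟨x⟩`. -/
def AlgBounded (C : Set (NCSPoly n)) : Prop :=
  ∃ N : ℝ, 0 < N ∧ ∃ (m : ℕ) (p c : Fin m → NCSPoly n),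
    (∀ i, IsFreePoly (p i)) ∧
    (∀ i, c i = 1 ∨ (c i ∈ C ∧ IsFreePoly (c i))) ∧
    ncConst N - ∑ j : Fin n, ncX j ^ 2 = ∑ i, p i * c i * ncStar (p i)

/-- The truncated quadratic module `M(C)_d`. -/
def MCd (C : Set (NCSPoly n)) (d : ℕ) : Set (SPoly n) :=
  {x | ∃ (K : ℕ) (f c : Fin K → NCSPoly n),
    (∀ i, c i ∈ insert (1 : NCSPoly n) C) ∧
    (∀ i, ncDeg (f i * c i * ncStar (f i)) ≤ 2 * d) ∧
    x = ∑ i, sig (f i * c i * ncStar (f i))}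

end StatePoly

/-!
Order the words of `I` and let `D_m` be the leading principal minors of the Hankel matrix `H`.
For `h = ∑_a adj(H_{m+1})_{a,m+1} u_a` one has `ς(h h⋆) = D_m D_{m+1}`, since `H_{m+1}` maps the
last column of its adjugate to `D_{m+1}` times a unit vector. Inductively this yields a nonzero
product `q` of elements `ς(h h⋆)` such that `q · det H` is again such a product, as long as no
`D_m` vanishes. They do not: sending `ς(w)` to the vacuum moment of the free semicircular system
`x_i ↦ ℓ_i + ℓ_i^*` on the full Fock space turns each `H_m` into the Gram matrix of the vectors
`u⋆(x)∅ = u⋆ + (shorter words)`, which are linearly independent.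
-/

theorem Matrix.posDef_of_linearIndependent_of_pairing {V ι : Type*} [AddCommGroup V]
    [Module ℝ V] [Fintype ι] (B : V →ₗ[ℝ] V →ₗ[ℝ] ℝ) (hB : ∀ u v, B u v = B v u)
    (hpos : ∀ v ≠ 0, 0 < B v v) {ψ : ι → V} (hψ : LinearIndependent ℝ ψ) :
    (Matrix.of fun a b => B (ψ a) (ψ b)).PosDef := by
  refine .of_dotProduct_mulVec_pos (Matrix.IsHermitian.ext fun a b => hB _ _) fun x hx => ?_
  have hcomb : ∑ a, x a • ψ a ≠ 0 := fun h =>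
    hx (funext (Fintype.linearIndependent_iff.mp hψ x h))
  refine (hpos _ hcomb).trans_eq ?_
  simp only [star_trivial, dotProduct, Matrix.mulVec, Matrix.of_apply, map_sum, map_smul,
    LinearMap.sum_apply, LinearMap.smul_apply, smul_eq_mul, Finset.mul_sum]
  rw [Finset.sum_comm]
  exact Finset.sum_congr rfl fun a _ => Finset.sum_congr rfl fun b _ => by ring

theorem Matrix.adjugate_col_dotProduct_mulVec {R ι : Type*} [CommRing R] [Fintype ι]
    [DecidableEq ι] (A : Matrix ι ι R) (j : ι) :
    (fun a => A.adjugate a j) ⬝ᵥ (A *ᵥ fun b => A.adjugate b j) = A.adjugate j j * A.det := by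
  have hcol : (A *ᵥ fun b => A.adjugate b j) = Pi.single j A.det := by
    ext a
    rw [Matrix.mulVec, dotProduct, ← Matrix.mul_apply, Matrix.mul_adjugate, Matrix.smul_apply,
      Matrix.one_apply, Pi.single_apply, smul_eq_mul, mul_ite, mul_one, mul_zero]
  rw [hcol, dotProduct_single]

namespace StatePoly

variable {n : ℕ}

abbrev Fock (n : ℕ) := List (Fin n) →₀ ℝ

noncomputable def fockPairing : Fock n →ₗ[ℝ] Fock n →ₗ[ℝ] ℝ :=
  Finsupp.lsum ℝ fun v => LinearMap.toSpanSingleton ℝ _ (Finsupp.lapply v)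

lemma fockPairing_apply (f g : Fock n) : fockPairing f g = ∑ v ∈ f.support, f v * g v := by
  simp [fockPairing, Finsupp.lsum_apply, Finsupp.sum]

lemma fockPairing_comm (f g : Fock n) : fockPairing f g = fockPairing g f := by
  classical
  have key : ∀ f g : Fock n, fockPairing f g = ∑ v ∈ f.support ∪ g.support, f v * g v :=
    fun f g => (fockPairing_apply f g).trans <| Finset.sum_subset Finset.subset_union_left
      fun v _ hv => by simp [Finsupp.notMem_support_iff.mp hv]
  simp only [key, Finset.union_comm f.support, mul_comm]

lemma fockPairing_self_pos {f : Fock n} (hf : f ≠ 0) : 0 < fockPairing f f := by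
  rw [fockPairing_apply]
  exact Finset.sum_pos (fun v hv => mul_self_pos.mpr (Finsupp.mem_support_iff.mp hv))
    (Finsupp.support_nonempty_iff.mpr hf)

@[simp] lemma fockPairing_single (v : List (Fin n)) (c : ℝ) (g : Fock n) :
    fockPairing (Finsupp.single v c) g = c * g v := by
  simp [fockPairing]

noncomputable def fockCreate (i : Fin n) : Fock n →ₗ[ℝ] Fock n :=
  Finsupp.lmapDomain ℝ ℝ (List.cons i)

noncomputable def fockAnnihilate (i : Fin n) : Fock n →ₗ[ℝ] Fock n :=
  Finsupp.lcomapDomain (List.cons i) List.cons_injective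

@[simp] lemma fockAnnihilate_apply (i : Fin n) (f : Fock n) (v : List (Fin n)) :
    fockAnnihilate i f v = f (i :: v) := rfl

lemma fockPairing_create (i : Fin n) (f g : Fock n) :
    fockPairing (fockCreate i f) g = fockPairing f (fockAnnihilate i g) := by
  induction f using Finsupp.induction_linear with
  | zero => simp
  | add f₁ f₂ h₁ h₂ => simp only [map_add, LinearMap.add_apply, h₁, h₂]
  | single v c => simp [fockCreate, fockAnnihilate]

lemma fockCreate_apply_cons (i j : Fin n) (v : List (Fin n)) (f : Fock n) :
    fockCreate i f (j :: v) = if i = j then f v else 0 := by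
  rcases eq_or_ne i j with rfl | hij
  · rw [if_pos rfl]
    exact Finsupp.mapDomain_apply List.cons_injective f v
  · rw [if_neg hij]
    exact Finsupp.mapDomain_of_notMem_range _ _ (by simp [hij])

noncomputable def fockField (i : Fin n) : Fock n →ₗ[ℝ] Fock n := fockCreate i + fockAnnihilate i

lemma fockPairing_field (i : Fin n) (f g : Fock n) :
    fockPairing (fockField i f) g = fockPairing f (fockField i g) := by
  simp only [fockField, LinearMap.add_apply, map_add, fockPairing_create]
  rw [add_comm, fockPairing_comm (fockAnnihilate i f), ← fockPairing_create, fockPairing_comm]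

noncomputable def fockWord (l : List (Fin n)) : Module.End ℝ (Fock n) := (l.map fockField).prod

lemma fockWord_cons (i : Fin n) (l : List (Fin n)) :
    fockWord (i :: l) = fockField i * fockWord l := by
  rw [fockWord, List.map_cons, List.prod_cons, fockWord]

lemma fockWord_append (l₁ l₂ : List (Fin n)) :
    fockWord (l₁ ++ l₂) = fockWord l₁ * fockWord l₂ := by
  rw [fockWord, List.map_append, List.prod_append, fockWord, fockWord]

lemma fockPairing_word (l : List (Fin n)) (f g : Fock n) :
    fockPairing (fockWord l f) g = fockPairing f (fockWord l.reverse g) := by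
  induction l generalizing f g with
  | nil => rfl
  | cons i t ih =>
    rw [fockWord_cons, Module.End.mul_apply, fockPairing_field, ih, List.reverse_cons,
      fockWord_append, Module.End.mul_apply]
    rfl

noncomputable def fockVacuum : Fock n := Finsupp.single [] 1

lemma fockWord_vacuum_apply_of_length_le {l v : List (Fin n)} (h : l.length ≤ v.length) :
    fockWord l fockVacuum v = if l = v then 1 else 0 := by
  induction l generalizing v with
  | nil => simp [fockWord, fockVacuum, Finsupp.single_apply]
  | cons i t ih =>
    obtain _ | ⟨j, v⟩ := v
    · simp at h
    simp only [List.length_cons] at h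
    have hann : fockWord t fockVacuum (i :: j :: v) = 0 := by
      rw [ih (by simp; omega), if_neg]
      rintro rfl
      simp at h
    rw [fockWord_cons, Module.End.mul_apply, fockField, LinearMap.add_apply, Finsupp.add_apply,
      fockCreate_apply_cons, fockAnnihilate_apply, hann, add_zero, ih (by omega)]
    by_cases hij : i = j <;> simp [hij]

lemma linearIndependent_fockWord_vacuum :
    LinearIndependent ℝ fun l : List (Fin n) => fockWord l fockVacuum := by
  classical
  refine linearIndependent_iff'.mpr fun s g hg => ?_
  by_contra! hne
  obtain ⟨l₀, hl₀, hmax⟩ := (s.filter (g · ≠ 0)).exists_max_image List.length <| by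
    obtain ⟨l, hl, hgl⟩ := hne
    exact ⟨l, Finset.mem_filter.mpr ⟨hl, hgl⟩⟩
  rw [Finset.mem_filter] at hl₀
  have hcoeff := congrArg (· l₀) hg
  simp only [Finsupp.finsetSum_apply, Finsupp.smul_apply, smul_eq_mul, Finsupp.coe_zero,
    Pi.zero_apply] at hcoeff
  rw [Finset.sum_eq_single_of_mem l₀ hl₀.1, fockWord_vacuum_apply_of_length_le le_rfl,
    if_pos rfl, mul_one] at hcoeff
  · exact hl₀.2 hcoeff
  · intro l hl hll₀
    by_cases hgl : g l = 0
    · rw [hgl, zero_mul]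
    · rw [fockWord_vacuum_apply_of_length_le (hmax l (Finset.mem_filter.mpr ⟨hl, hgl⟩)),
        if_neg hll₀, mul_zero]

noncomputable def fockMoment (l : List (Fin n)) : ℝ :=
  fockPairing (fockWord l fockVacuum) fockVacuum

lemma fockMoment_nil : fockMoment ([] : List (Fin n)) = 1 := by
  simp [fockMoment, fockWord, fockVacuum]

lemma fockMoment_reverse (l : List (Fin n)) : fockMoment l.reverse = fockMoment l := by
  rw [fockMoment, fockPairing_word, List.reverse_reverse, fockPairing_comm, fockMoment]

lemma fockMoment_append_reverse (u w : List (Fin n)) :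
    fockMoment (u ++ w.reverse) =
      fockPairing (fockWord u.reverse fockVacuum) (fockWord w.reverse fockVacuum) := by
  rw [fockMoment, fockWord_append, Module.End.mul_apply, fockPairing_word, fockPairing_comm]

lemma posDef_fockMoment_hankel {ι : Type*} [Fintype ι] {w : ι → List (Fin n)}
    (hw : Function.Injective w) :
    (Matrix.of fun a b => fockMoment (w a ++ (w b).reverse)).PosDef := by
  simp only [fockMoment_append_reverse]
  exact Matrix.posDef_of_linearIndependent_of_pairing _ fockPairing_comm
    (fun _ => fockPairing_self_pos)
    (linearIndependent_fockWord_vacuum.comp _ (List.reverse_injective.comp hw))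

noncomputable def fockState : SW n → ℝ :=
  Quotient.lift (fun l => fockMoment l.1) <| by
    rintro ⟨u, _⟩ ⟨v, _⟩ (h | h) <;> simp only at h <;> subst h
    exacts [rfl, fockMoment_reverse v]

lemma eval_fockState_sigWordL (l : List (Fin n)) :
    MvPolynomial.eval fockState (sigWordL l) = fockMoment l := by
  rw [sigWordL]
  split_ifs with h
  · rw [map_one, h, fockMoment_nil]
  · exact MvPolynomial.eval_X ..

noncomputable def hankel {ι : Type*} (w : ι → List (Fin n)) : Matrix ι ι (SPoly n) :=
  Matrix.of fun a b => sigWordL (w a ++ (w b).reverse)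

lemma det_hankel_ne_zero {ι : Type*} [Fintype ι] [DecidableEq ι] {w : ι → List (Fin n)}
    (hw : Function.Injective w) : (hankel w).det ≠ 0 := by
  intro h
  have heval : (MvPolynomial.eval fockState).mapMatrix (hankel w) =
      Matrix.of fun a b => fockMoment (w a ++ (w b).reverse) := by
    ext a b
    exact eval_fockState_sigWordL _
  have hpos := (posDef_fockMoment_hankel hw).det_pos
  rw [← heval, ← RingHom.map_det, h, map_zero] at hpos
  exact hpos.false

lemma sig_single (w : Word n) (c : SPoly n) :
    sig (MonoidAlgebra.single w c) = c * sigWordL (FreeMonoid.toList w) :=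
  Finsupp.sum_single_index (zero_mul _)

lemma sig_sum {ι : Type*} (s : Finset ι) (f : ι → NCSPoly n) :
    sig (∑ i ∈ s, f i) = ∑ i ∈ s, sig (f i) := by
  rw [sig, MonoidAlgebra.coeff_sum]
  exact (Finsupp.sum_finsetSum_index (fun _ => zero_mul _) fun _ _ _ => add_mul _ _ _).symm

lemma ncStar_single (w : Word n) (c : SPoly n) :
    ncStar (MonoidAlgebra.single w c) = MonoidAlgebra.single (wordRev w) c := by
  rw [ncStar, MonoidAlgebra.coeff_single, Finsupp.mapDomain_single, MonoidAlgebra.ofCoeff_single]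

lemma ncStar_sum {ι : Type*} (s : Finset ι) (f : ι → NCSPoly n) :
    ncStar (∑ i ∈ s, f i) = ∑ i ∈ s, ncStar (f i) := by
  rw [ncStar, MonoidAlgebra.coeff_sum, Finsupp.mapDomain_finsetSum, MonoidAlgebra.ofCoeff_sum]
  rfl

noncomputable def wordComb {ι : Type*} [Fintype ι] (w : ι → List (Fin n)) (c : ι → SPoly n) :
    NCSPoly n :=
  ∑ a, MonoidAlgebra.single (FreeMonoid.ofList (w a)) (c a)

lemma sig_wordComb_mul_ncStar {ι : Type*} [Fintype ι] (w : ι → List (Fin n))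
    (c : ι → SPoly n) :
    sig (wordComb w c * ncStar (wordComb w c)) = c ⬝ᵥ (hankel w *ᵥ c) := by
  simp only [wordComb, ncStar_sum, ncStar_single]
  rw [Finset.sum_mul_sum]
  simp only [MonoidAlgebra.single_mul_single, sig_sum, sig_single, dotProduct, Matrix.mulVec,
    hankel, Matrix.of_apply, Finset.mul_sum]
  refine Finset.sum_congr rfl fun a _ => Finset.sum_congr rfl fun b _ => ?_
  rw [show FreeMonoid.toList (FreeMonoid.ofList (w a) * wordRev (FreeMonoid.ofList (w b)))
    = w a ++ (w b).reverse from rfl]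
  ring

lemma exists_sig_mul_ncStar_eq_det_mul_det {k : ℕ} (w : Fin (k + 1) → List (Fin n)) :
    ∃ h : NCSPoly n, sig (h * ncStar h) = (hankel (w ∘ Fin.castSucc)).det * (hankel w).det := by
  refine ⟨wordComb w fun a => (hankel w).adjugate a (Fin.last k), ?_⟩
  rw [sig_wordComb_mul_ncStar, Matrix.adjugate_col_dotProduct_mulVec,
    Matrix.adjugate_fin_succ_eq_det_submatrix, Fin.succAbove_last, Fin.val_last,
    Even.neg_one_pow ⟨k, rfl⟩, one_mul]
  rfl

def stateSquares (n : ℕ) : Set (SPoly n) := Set.range fun h : NCSPoly n => sig (h * ncStar h)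

lemma exists_eq_prod_of_mem_closure_stateSquares {x : SPoly n}
    (hx : x ∈ Submonoid.closure (stateSquares n)) :
    ∃ (m : ℕ) (h : Fin m → NCSPoly n), x = ∏ j, sig (h j * ncStar (h j)) := by
  induction hx using Submonoid.closure_induction with
  | mem _ hx =>
    obtain ⟨h, rfl⟩ := hx
    exact ⟨1, fun _ => h, by rw [Fin.prod_univ_one]⟩
  | one => exact ⟨0, Fin.elim0, by rw [Fin.prod_univ_zero]⟩
  | mul _ _ _ _ hx hy =>
    obtain ⟨m, h, rfl⟩ := hx
    obtain ⟨m', h', rfl⟩ := hy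
    exact ⟨m + m', Fin.append h h', by simp [Fin.prod_univ_add]⟩

lemma mem_Omega_of_mem_closure_stateSquares {x : SPoly n}
    (hx : x ∈ Submonoid.closure (stateSquares n)) : x ∈ Omega n :=
  ⟨1, fun _ => x, fun _ => exists_eq_prod_of_mem_closure_stateSquares hx,
    (Fin.sum_univ_one fun _ => x).symm⟩

lemma exists_mul_det_hankel_mem_closure_stateSquares_fin :
    ∀ {k : ℕ} {w : Fin k → List (Fin n)}, Function.Injective w →
      ∃ q ∈ Submonoid.closure (stateSquares n), q ≠ 0 ∧
        q * (hankel w).det ∈ Submonoid.closure (stateSquares n)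
  | 0, w, _ => ⟨1, one_mem _, one_ne_zero, by simp [Matrix.det_isEmpty]⟩
  | k + 1, w, hw => by
    obtain ⟨q, hq, hq0, hp⟩ :=
      exists_mul_det_hankel_mem_closure_stateSquares_fin (hw.comp (Fin.castSucc_injective k))
    obtain ⟨h, hh⟩ := exists_sig_mul_ncStar_eq_det_mul_det w
    refine ⟨q * (q * (hankel (w ∘ Fin.castSucc)).det), mul_mem hq hp,
      mul_ne_zero hq0 (mul_ne_zero hq0 (det_hankel_ne_zero (hw.comp (Fin.castSucc_injective k)))),
      ?_⟩
    have hmem : q * q * sig (h * ncStar h) ∈ Submonoid.closure (stateSquares n) :=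
      mul_mem (mul_mem hq hq) (Submonoid.subset_closure ⟨h, rfl⟩)
    convert hmem using 1
    rw [hh]
    ring

lemma exists_mul_det_hankel_mem_closure_stateSquares {ι : Type*} [Fintype ι] [DecidableEq ι]
    {w : ι → List (Fin n)} (hw : Function.Injective w) :
    ∃ q ∈ Submonoid.closure (stateSquares n), q ≠ 0 ∧
      q * (hankel w).det ∈ Submonoid.closure (stateSquares n) := by
  obtain ⟨q, hq, hq0, hp⟩ :=
    exists_mul_det_hankel_mem_closure_stateSquares_fin
      (hw.comp (Fintype.equivFin ι).symm.injective)
  refine ⟨q, hq, hq0, ?_⟩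
  rwa [← Matrix.det_submatrix_equiv_self (Fintype.equivFin ι).symm]

theorem statement_4_general (n : ℕ) (I : Finset (List (Fin n))) :
    ∃ p ∈ Omega n, ∃ q ∈ Omega n, q ≠ 0 ∧
      q * Matrix.det (Matrix.of fun (u w : I) => sigWordL (u.1 ++ w.1.reverse)) = p := by
  obtain ⟨q, hq, hq0, hp⟩ :=
    exists_mul_det_hankel_mem_closure_stateSquares (w := ((↑) : I → List (Fin n)))
      Subtype.val_injective
  exact ⟨_, mem_Omega_of_mem_closure_stateSquares hp, q,
    mem_Omega_of_mem_closure_stateSquares hq, hq0, rfl⟩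

/-- Proposition `p:psdhank`.
Every principal minor `m` of the Hankel matrix `H_d = (ς(u w⋆))_{u,w ∈ ⟨x⟩_d}` (rows and
columns indexed by a subset `I` of the words of length at most `d`) is a quotient of two
elements of `Ω`: there are `p, q ∈ Ω` with `q ≠ 0` and `q·m = p` in `𝒮`. -/
theorem statement_4 (n d : ℕ) (hn : 1 ≤ n) (I : Finset (List (Fin n)))
    (hI : ∀ u ∈ I, u.length ≤ d) :
    ∃ p ∈ Omega n, ∃ q ∈ Omega n, q ≠ 0 ∧
      q * Matrix.det (Matrix.of fun (u w : I) => sigWordL (u.1 ++ w.1.reverse)) = p :=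
  statement_4_general n I

end StatePoly
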